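/- Let n ≥ 1 and X_1,…,X_n ∈ ℝ. For a provisional value x ∈ ℝ set X_{n+1} = x and define the non-conformity scores μ_i(x) = −X_i + Σ_{j ∈ {1,…,n+1}, j ≠ i} X_j for i = 1,…,n+1. Then (a) for each i ∈ {1,…,n}, μ_i(x) ≥ μ_{n+1}(x) if and only if x ≥ X_i; and (b) for every α ∈ (0,1) with (n+1)α not an integer and r := ⌊(n+1)α⌋ satisfying 1 ≤ r ≤ n, the conformal prediction region {x ∈ ℝ : #{i ∈ {1,…,n+1} : μ_i(x) ≥ μ_{n+1}(x)} > (n+1)α} equals the one-sided interval {x ∈ ℝ : x ≥ X_{(r)}}, where X_{(k)} denotes the k-th smallest value among X_1,…,X_n. -/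
import Mathlib

lemma mu_simp {n : ℕ} (v : Fin (n+1) → ℝ) (i : Fin (n+1)) :
    -v i + ∑ j ∈ Finset.univ.erase i, v j = (∑ j, v j) - 2 * v i := by
  rw [Finset.sum_erase_eq_sub (Finset.mem_univ i)]
  ring

lemma count_le_iff {n : ℕ} (Y : Fin n → ℝ) (hY : Monotone Y) (x : ℝ) (r : ℕ)
    (hr1 : 1 ≤ r) (hrn : r ≤ n) :
    r ≤ (Finset.univ.filter fun i => Y i ≤ x).card ↔ Y ⟨r-1, by omega⟩ ≤ x := by
  constructor
  · intro h
    by_contra hx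
    push_neg at hx
    have hsub : (Finset.univ.filter fun i => Y i ≤ x) ⊆ Finset.Iio ⟨r-1, by omega⟩ := by
      intro i hi
      simp only [Finset.mem_filter] at hi
      rw [Finset.mem_Iio]
      by_contra hle
      push_neg at hle
      exact absurd (le_trans (hY hle) hi.2) (not_le.mpr hx)
    have := Finset.card_le_card hsub
    rw [Fin.card_Iio] at this
    simp only [Fin.val_mk] at this
    omega
  · intro h
    have hsub : Finset.Iic (⟨r-1, by omega⟩ : Fin n) ⊆
        Finset.univ.filter fun i => Y i ≤ x := by
      intro i hi
      rw [Finset.mem_Iic] at hi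
      simp only [Finset.mem_filter, Finset.mem_univ, true_and]
      exact le_trans (hY hi) h
    have := Finset.card_le_card hsub
    rw [Fin.card_Iic] at this
    simp only [Fin.val_mk] at this
    omega

/-- Theorem 8 of the paper (unsupervised learning): for the scores
`μ_i(x) = −X_i + Σ_{j ≠ i} X_j` (with `X_{n+1} = x`), (a) `μ_i(x) ≥ μ_{n+1}(x)`
iff `x ≥ X_i`, and (b) the conformal prediction region
`{x : #{i : μ_i(x) ≥ μ_{n+1}(x)} > (n+1)α}` is the one-sided interval
`[X_{(r)}, ∞)`, where `r = ⌊(n+1)α⌋` and `X_{(k)}` is the k-th smallest of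
`X_1, …, X_n`. -/
theorem stmt_17
    (n : ℕ) (hn : 1 ≤ n)
    (X : Fin n → ℝ)
    (μ : ℝ → Fin (n + 1) → ℝ)
    (hμ : ∀ (x : ℝ) (i : Fin (n + 1)),
      μ x i = -(Fin.snoc X x : Fin (n + 1) → ℝ) i
        + ∑ j ∈ Finset.univ.erase i, (Fin.snoc X x : Fin (n + 1) → ℝ) j) :
    (∀ (x : ℝ) (i : Fin n),
      μ x (Fin.last n) ≤ μ x i.castSucc ↔ X i ≤ x) ∧
    (∀ (α : ℝ) (_ : α ∈ Set.Ioo (0 : ℝ) 1)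
      (_ : ∀ k : ℤ, ((n : ℝ) + 1) * α ≠ (k : ℝ))
      (r : ℕ) (_ : (r : ℤ) = ⌊((n : ℝ) + 1) * α⌋) (_ : 1 ≤ r) (_ : r ≤ n),
      {x : ℝ | ((n : ℝ) + 1) * α <
          ((Finset.univ.filter
            (fun i : Fin (n + 1) => μ x (Fin.last n) ≤ μ x i)).card : ℝ)}
        = Set.Ici ((X ∘ Tuple.sort X) ⟨r - 1, by omega⟩)) := by
  have key : ∀ (x : ℝ) (i : Fin (n+1)),
      μ x (Fin.last n) ≤ μ x i ↔ (Fin.snoc X x : Fin (n+1) → ℝ) i ≤ x := by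
    intro x i
    rw [hμ, hμ, mu_simp, mu_simp, Fin.snoc_last]
    constructor <;> intro h <;> linarith
  have parta : ∀ (x : ℝ) (i : Fin n),
      μ x (Fin.last n) ≤ μ x i.castSucc ↔ X i ≤ x := by
    intro x i
    rw [key]
    simp
  refine ⟨parta, ?_⟩
  intro α hα hnint r hr hr1 hrn
  -- count identity
  have hcard : ∀ x : ℝ,
      (Finset.univ.filter (fun i : Fin (n + 1) => μ x (Fin.last n) ≤ μ x i)).card
        = (Finset.univ.filter fun i : Fin n => X i ≤ x).card + 1 := by
    intro x
    rw [Finset.card_filter, Finset.card_filter, Fin.sum_univ_castSucc]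
    simp only [key, Fin.snoc_castSucc, Fin.snoc_last, le_refl, if_true]
  -- permutation invariance
  set Y : Fin n → ℝ := X ∘ Tuple.sort X with hY
  have hYmono : Monotone Y := Tuple.monotone_sort X
  have hperm : ∀ x : ℝ,
      (Finset.univ.filter fun i : Fin n => X i ≤ x).card
        = (Finset.univ.filter fun i : Fin n => Y i ≤ x).card := by
    intro x
    have e : {i : Fin n // Y i ≤ x} ≃ {i : Fin n // X i ≤ x} :=
      Equiv.subtypeEquiv (Tuple.sort X) (fun i => by simp [hY])
    have hc := Fintype.card_congr e
    simpa [Fintype.card_subtype] using hc.symm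
  -- floor facts
  obtain ⟨hα0, hα1⟩ := hα
  have hfl : (r : ℝ) < ((n:ℝ)+1) * α ∧ ((n:ℝ)+1) * α < (r:ℝ) + 1 := by
    have h1 := Int.floor_le (((n:ℝ)+1) * α)
    have h2 := Int.lt_floor_add_one (((n:ℝ)+1) * α)
    rw [← hr] at h1 h2
    push_cast at h1 h2
    have hne := hnint (r : ℤ)
    push_cast at hne
    exact ⟨lt_of_le_of_ne h1 (Ne.symm hne), h2⟩
  ext x
  simp only [Set.mem_setOf_eq, Set.mem_Ici, hcard, hperm]
  rw [← count_le_iff Y hYmono x r hr1 hrn]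
  constructor
  · intro h
    have : ((n:ℝ)+1) * α - 1 < ((Finset.univ.filter fun i : Fin n => Y i ≤ x).card : ℝ) := by
      push_cast at h ⊢; linarith
    have : (r:ℝ) - 1 < ((Finset.univ.filter fun i : Fin n => Y i ≤ x).card : ℝ) :=
      lt_of_le_of_lt (by linarith [hfl.1]) this
    have h2 : (r:ℝ) < ((Finset.univ.filter fun i : Fin n => Y i ≤ x).card : ℝ) + 1 := by
      linarith
    have h3 : r < (Finset.univ.filter fun i : Fin n => Y i ≤ x).card + 1 := by
      exact_mod_cast h2
    omega
  · intro h
    have : (r:ℝ) ≤ ((Finset.univ.filter fun i : Fin n => Y i ≤ x).card : ℝ) := by exact_mod_cast h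
    push_cast
    linarith [hfl.2]
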